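/- Let A be a closed densely defined operator from H1 to H2 with Moore–Penrose inverse B, and suppose A* is injective. Then (I + AA*)^{-1} + (I + B*B)^{-1} = I on H2. -/

import Mathlib

open scoped InnerProductSpace

variable {H1 H2 : Type*}
  [NormedAddCommGroup H1] [InnerProductSpace ℂ H1] [CompleteSpace H1]
  [NormedAddCommGroup H2] [InnerProductSpace ℂ H2] [CompleteSpace H2]

/-- `B` is the Moore–Penrose inverse of the closed densely defined operator `A : H1 →ₗ. H2`. -/
def IsMPInverseP (A : H1 →ₗ.[ℂ] H2) (B : H2 →ₗ.[ℂ] H1) : Prop :=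
  B.IsClosed ∧
    B.domain = LinearMap.range A.toFun ⊔
      (LinearMap.ker A.adjoint.toFun).map A.adjoint.domain.subtype ∧
    (LinearMap.ker B.toFun).map B.domain.subtype =
      (LinearMap.ker A.adjoint.toFun).map A.adjoint.domain.subtype ∧
    (∀ x : A.domain, ∃ h : A x ∈ B.domain, ∃ h2 : B ⟨A x, h⟩ ∈ A.domain,
      A ⟨B ⟨A x, h⟩, h2⟩ = A x) ∧
    (∀ y : B.domain, ∃ h2 : B y ∈ A.domain, ∃ h : A ⟨B y, h2⟩ ∈ B.domain,
      B ⟨A ⟨B y, h2⟩, h⟩ = B y) ∧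
    (∀ (y : B.domain) (h2 : B y ∈ A.domain),
      A ⟨B y, h2⟩ ∈ (LinearMap.range A.toFun).topologicalClosure ∧
      ∀ z ∈ (LinearMap.range A.toFun).topologicalClosure, ⟪(y : H2) - A ⟨B y, h2⟩, z⟫_ℂ = 0) ∧
    (∀ (x : A.domain) (h : A x ∈ B.domain),
      B ⟨A x, h⟩ ∈ (LinearMap.range B.toFun).topologicalClosure ∧
      ∀ z ∈ (LinearMap.range B.toFun).topologicalClosure, ⟪(x : H1) - B ⟨A x, h⟩, z⟫_ℂ = 0)

/-- For a closed densely defined `A` with Moore–Penrose inverse `B` and `A*` injective,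
`(I + AA*)⁻¹ + (I + B*B)⁻¹ = I` on `H2`. -/
theorem mp_resolvent_sum_injective (A : H1 →ₗ.[ℂ] H2) (hA : A.IsClosed)
    (hAd : Dense (A.domain : Set H1))
    (B : H2 →ₗ.[ℂ] H1) (hB : IsMPInverseP A B)
    (hinj : ∀ (y : H2) (h : y ∈ A.adjoint.domain), A.adjoint ⟨y, h⟩ = 0 → y = 0)
    (R1 : H2 →L[ℂ] H2)
    (hR1 : ∀ y : H2, ∃ hy : R1 y ∈ A.adjoint.domain, ∃ hx : A.adjoint ⟨R1 y, hy⟩ ∈ A.domain,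
      R1 y + A ⟨A.adjoint ⟨R1 y, hy⟩, hx⟩ = y)
    (R2 : H2 →L[ℂ] H2)
    (hR2 : ∀ y : H2, ∃ hy : R2 y ∈ B.domain, ∃ hx : B ⟨R2 y, hy⟩ ∈ B.adjoint.domain,
      R2 y + B.adjoint ⟨B ⟨R2 y, hy⟩, hx⟩ = y) :
    ∀ y : H2, R1 y + R2 y = y := by
  obtain ⟨hBclosed, hdom, hker, hABA, hBAB, hortA, hortB⟩ := hB
  -- the kernel part of the domain of `B` is trivial
  have hkerbot : (LinearMap.ker A.adjoint.toFun).map A.adjoint.domain.subtype = ⊥ := by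
    rw [Submodule.eq_bot_iff]
    rintro z ⟨⟨w, hw⟩, hzker, rfl⟩
    exact hinj w hw hzker
  have hdom' : B.domain = LinearMap.range A.toFun := by rw [hdom, hkerbot, sup_bot_eq]
  -- the range of `A` is dense
  have hrange_dense : Dense ((LinearMap.range A.toFun : Submodule ℂ H2) : Set H2) := by
    rw [Submodule.dense_iff_topologicalClosure_eq_top,
      Submodule.topologicalClosure_eq_top_iff, Submodule.eq_bot_iff]
    intro z hz
    rw [Submodule.mem_orthogonal] at hz
    have hz' : ∀ x : A.domain, ⟪(0 : H1), (x : H1)⟫_ℂ = ⟪z, A x⟫_ℂ := by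
      intro x
      rw [inner_zero_left, ← inner_conj_symm,
        hz (A x) (LinearMap.mem_range_self _ x), map_zero]
    have hzmem : z ∈ A.adjoint.domain :=
      LinearPMap.mem_adjoint_domain_of_exists z ⟨0, hz'⟩
    exact hinj z hzmem (LinearPMap.adjoint_apply_eq hAd ⟨z, hzmem⟩ hz')
  have hBd : Dense (B.domain : Set H2) := by rw [hdom']; exact hrange_dense
  have hFA := LinearPMap.adjoint_isFormalAdjoint hAd
  have hFB := LinearPMap.adjoint_isFormalAdjoint hBd
  intro y
  obtain ⟨hu, hAu, hu_eq⟩ := hR1 y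
  obtain ⟨hv, hxB, hv_eq⟩ := hR2 y
  -- notations
  set u : H2 := R1 y with hu_def
  set v : H2 := R2 y with hv_def
  set a : H1 := A.adjoint ⟨u, hu⟩ with ha_def
  set x : H1 := B ⟨v, hv⟩ with hx_def
  -- `x ∈ D(A)` and `A x = v`
  obtain ⟨hxA, -, -⟩ := hBAB ⟨v, hv⟩
  have hvcl : v ∈ (LinearMap.range A.toFun).topologicalClosure := by
    apply Submodule.le_topologicalClosure
    rw [← hdom']; exact hv
  have hAx : A ⟨x, hxA⟩ = v := by
    obtain ⟨hmem, horth⟩ := hortA ⟨v, hv⟩ hxA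
    have h0 : v - A ⟨x, hxA⟩ ∈ (LinearMap.range A.toFun).topologicalClosure :=
      sub_mem hvcl hmem
    have := horth _ h0
    rw [inner_self_eq_zero, sub_eq_zero] at this
    exact this.symm
  -- `p := a - x ∈ D(A)`
  set p : H1 := a - x with hp_def
  have hp : p ∈ A.domain := sub_mem hAu hxA
  -- the two representations of `w := y - u - v`
  have hAa : A ⟨a, hAu⟩ = y - u := eq_sub_of_add_eq' hu_eq
  have hBx : B.adjoint ⟨x, hxB⟩ = y - v := eq_sub_of_add_eq' hv_eq
  have hw1 : A ⟨p, hp⟩ = y - u - v := by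
    have hsub : (⟨p, hp⟩ : A.domain) = ⟨a, hAu⟩ - ⟨x, hxA⟩ := rfl
    rw [hsub, A.map_sub, hAa, hAx]
  -- `q := B (A p)` and the orthogonality from the MP property
  obtain ⟨hq1, hq2, -⟩ := hABA ⟨p, hp⟩
  have hxcl : x ∈ (LinearMap.range B.toFun).topologicalClosure :=
    Submodule.le_topologicalClosure _ (LinearMap.mem_range_self _ (⟨v, hv⟩ : B.domain))
  obtain ⟨-, hporth⟩ := hortB ⟨p, hp⟩ hq1
  have hxq : ⟪x, (B ⟨A ⟨p, hp⟩, hq1⟩ : H1)⟫_ℂ = ⟪x, p⟫_ℂ := by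
    have h0 := hporth x hxcl
    rw [inner_sub_left] at h0
    have h0' : ⟪x, p - B ⟨A ⟨p, hp⟩, hq1⟩⟫_ℂ = 0 := by
      rw [← inner_conj_symm, hporth x hxcl, map_zero]
    rw [inner_sub_right, sub_eq_zero] at h0'
    exact h0'.symm
  -- compute `⟪w, w⟫ = -⟪p, p⟫`
  have hkey : ⟪(y - u - v : H2), (y - u - v : H2)⟫_ℂ = -⟪p, p⟫_ℂ := by
    have e1 : ⟪(B.adjoint ⟨x, hxB⟩ : H2), A ⟨p, hp⟩⟫_ℂ = ⟪x, (B ⟨A ⟨p, hp⟩, hq1⟩ : H1)⟫_ℂ :=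
      hFB ⟨x, hxB⟩ ⟨A ⟨p, hp⟩, hq1⟩
    have e2 : ⟪a, p⟫_ℂ = ⟪u, A ⟨p, hp⟩⟫_ℂ := hFA ⟨u, hu⟩ ⟨p, hp⟩
    calc ⟪(y - u - v : H2), (y - u - v : H2)⟫_ℂ
        = ⟪(B.adjoint ⟨x, hxB⟩ : H2) - u, A ⟨p, hp⟩⟫_ℂ := by
          rw [hw1, hBx, sub_right_comm]
      _ = ⟪x, (B ⟨A ⟨p, hp⟩, hq1⟩ : H1)⟫_ℂ - ⟪a, p⟫_ℂ := by
          rw [inner_sub_left, e1, e2]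
      _ = ⟪x - a, p⟫_ℂ := by rw [hxq, ← inner_sub_left]
      _ = -⟪p, p⟫_ℂ := by rw [hp_def, ← inner_neg_left, neg_sub]
  -- conclude `w = 0`
  have hw0 : y - u - v = 0 := by
    have h1 : RCLike.re ⟪(y - u - v : H2), (y - u - v : H2)⟫_ℂ
        = - RCLike.re ⟪p, p⟫_ℂ := by rw [hkey, map_neg]
    have h2 := inner_self_nonneg (𝕜 := ℂ) (x := y - u - v)
    have h3 := inner_self_nonneg (𝕜 := ℂ) (x := p)
    have h4 : RCLike.re ⟪(y - u - v : H2), (y - u - v : H2)⟫_ℂ = 0 := by linarith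
    rw [inner_self_eq_norm_sq] at h4
    rw [pow_eq_zero_iff two_ne_zero, norm_eq_zero] at h4
    exact h4
  rw [sub_sub, sub_eq_zero] at hw0
  exact hw0.symm
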